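/- Let M be a weight sequence whose associated function satisfies ω_M(2t) ≤ L·ω_M(t) + C for all t ≥ 0 and some C, L > 0, and set ν_M(t) = ω_M(e^t) for t ≥ 0. Let γ > 0. Then the following are equivalent: (a) there exist C', L' > 0 with ∫_1^∞ ω_M(ts)/s^{1+1/γ} ds ≤ L'·ω_M(t) + C' for all t ≥ 0; (b) there exist C'', L'' > 0 with ∫_0^∞ ν_M(x+s) e^{-s/γ} ds ≤ L''·ν_M(x) + C'' for all x ≥ 0. -/
import Mathlib


open Filter MeasureTheory

noncomputable def omegaM (M : ℕ → ℝ) (t : ℝ) : ℝ :=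
  ⨆ p : ℕ, Real.log (t ^ p * M 0 / M p)

lemma omegaM_bdd (M : ℕ → ℝ) (hpos : ∀ p, 0 < M p)
    (hws : Tendsto (fun p : ℕ => (M p) ^ ((p : ℝ)⁻¹)) atTop atTop)
    {t : ℝ} (ht : 0 ≤ t) :
    BddAbove (Set.range fun p : ℕ => Real.log (t ^ p * M 0 / M p)) := by
  obtain ⟨N, hN⟩ := eventually_atTop.1 (hws.eventually_ge_atTop t)
  set B : ℝ := |Real.log (M 0)| with hB
  have key : ∀ p : ℕ, max N 1 ≤ p → Real.log (t ^ p * M 0 / M p) ≤ B := by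
    intro p hp
    have hp1 : 1 ≤ p := le_trans (le_max_right _ _) hp
    have hpne : (p : ℝ) ≠ 0 := Nat.cast_ne_zero.2 (by omega)
    have h1 : t ≤ (M p) ^ ((p : ℝ)⁻¹) := hN p (le_trans (le_max_left _ _) hp)
    have hMp := hpos p
    have h2 : t ^ p ≤ M p := by
      have h := Real.rpow_le_rpow ht h1 (Nat.cast_nonneg p)
      rwa [← Real.rpow_mul hMp.le, inv_mul_cancel₀ hpne, Real.rpow_one,
        Real.rpow_natCast] at h
    have h3 : t ^ p * M 0 / M p ≤ M 0 := by
      rw [div_le_iff₀ hMp]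
      nlinarith [mul_le_mul_of_nonneg_right h2 (hpos 0).le]
    rcases lt_or_ge 0 (t ^ p * M 0 / M p) with harg | harg
    · exact (Real.log_le_log harg h3).trans (le_abs_self _)
    · have : t ^ p * M 0 / M p = 0 := le_antisymm harg (div_nonneg (mul_nonneg (pow_nonneg ht p) (hpos 0).le) (hpos p).le)
      rw [this, Real.log_zero]
      exact abs_nonneg _
  have hsub : (Set.range fun p : ℕ => Real.log (t ^ p * M 0 / M p)) ⊆
      ((fun p : ℕ => Real.log (t ^ p * M 0 / M p)) '' Set.Iio (max N 1)) ∪ Set.Iic B := by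
    rintro _ ⟨p, rfl⟩
    rcases lt_or_ge p (max N 1) with h | h
    · exact Or.inl ⟨p, h, rfl⟩
    · exact Or.inr (key p h)
  exact (((Set.finite_Iio _).image _).bddAbove.union bddAbove_Iic).mono hsub

lemma omegaM_nonneg (M : ℕ → ℝ) (hpos : ∀ p, 0 < M p)
    (hws : Tendsto (fun p : ℕ => (M p) ^ ((p : ℝ)⁻¹)) atTop atTop)
    {t : ℝ} (ht : 0 ≤ t) : 0 ≤ omegaM M t := by
  have h := le_ciSup (omegaM_bdd M hpos hws ht) 0
  simpa [omegaM, div_self (hpos 0).ne'] using h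

lemma omegaM_zero (M : ℕ → ℝ) (hpos : ∀ p, 0 < M p) : omegaM M 0 = 0 := by
  have : (fun p : ℕ => Real.log ((0 : ℝ) ^ p * M 0 / M p)) = fun _ => (0 : ℝ) := by
    funext p
    cases p with
    | zero => simp [div_self (hpos 0).ne']
    | succ n => simp [zero_pow (Nat.succ_ne_zero n)]
  rw [omegaM, this, ciSup_const]

lemma omegaM_mono (M : ℕ → ℝ) (hpos : ∀ p, 0 < M p)
    (hws : Tendsto (fun p : ℕ => (M p) ^ ((p : ℝ)⁻¹)) atTop atTop)
    {t t' : ℝ} (ht : 0 ≤ t) (htt' : t ≤ t') : omegaM M t ≤ omegaM M t' := by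
  rcases eq_or_lt_of_le ht with h0 | h0
  · rw [← h0, omegaM_zero M hpos]
    exact omegaM_nonneg M hpos hws (le_trans ht htt')
  · refine ciSup_mono (omegaM_bdd M hpos hws (le_trans ht htt')) fun p => ?_
    refine Real.log_le_log (div_pos (mul_pos (pow_pos h0 p) (hpos 0)) (hpos p)) ?_
    have hpow : t ^ p ≤ t' ^ p := pow_le_pow_left₀ h0.le htt' p
    have h0' := hpos p
    have h00 := (hpos 0).le
    exact div_le_div_of_nonneg_right (mul_le_mul_of_nonneg_right hpow h00) h0'.le

/-- Change of variables `s = exp u`. -/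
lemma omegaM_cov (M : ℕ → ℝ) {γ : ℝ} (hγ : 0 < γ) (x : ℝ) :
    (∫ s in Set.Ioi (1 : ℝ), omegaM M (Real.exp x * s) / s ^ (1 + 1 / γ)) =
    ∫ s in Set.Ioi (0 : ℝ), omegaM M (Real.exp (x + s)) * Real.exp (-s / γ) := by
  have himg : Real.exp '' Set.Ioi (0 : ℝ) = Set.Ioi 1 := by
    ext y
    constructor
    · rintro ⟨u, hu, rfl⟩
      have : (1 : ℝ) < Real.exp u := by
        rw [← Real.exp_zero]
        exact Real.exp_lt_exp.mpr hu
      exact this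
    · intro hy
      exact ⟨Real.log y, Real.log_pos hy, Real.exp_log (lt_trans one_pos hy)⟩
  rw [← himg, integral_image_eq_integral_abs_deriv_smul measurableSet_Ioi
    (fun u _ => (Real.hasDerivAt_exp u).hasDerivWithinAt)
    (Real.exp_injective.injOn) (fun s => omegaM M (Real.exp x * s) / s ^ (1 + 1 / γ))]
  refine setIntegral_congr_fun measurableSet_Ioi fun u _ => ?_
  have hexp : Real.exp u ^ (1 + 1 / γ) = Real.exp (u * (1 + 1 / γ)) :=
    (Real.exp_mul u (1 + 1 / γ)).symm
  rw [smul_eq_mul, abs_of_pos (Real.exp_pos u), hexp, ← Real.exp_add x u,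
    div_eq_mul_inv, ← Real.exp_neg, mul_comm (Real.exp u), mul_assoc, ← Real.exp_add]
  congr 1
  rw [Real.exp_eq_exp]
  field_simp
  ring

set_option maxHeartbeats 1000000 in
theorem stmt_9 (M : ℕ → ℝ) (hpos : ∀ p, 0 < M p)
    (hws : Tendsto (fun p : ℕ => (M p) ^ ((p : ℝ)⁻¹)) atTop atTop)
    (hdoubling : ∃ C > (0 : ℝ), ∃ L > (0 : ℝ), ∀ t : ℝ, 0 ≤ t →
      omegaM M (2 * t) ≤ L * omegaM M t + C)
    (γ : ℝ) (hγ : 0 < γ) :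
    (∃ C' > (0 : ℝ), ∃ L' > (0 : ℝ), ∀ t : ℝ, 0 ≤ t →
      (∫ s in Set.Ioi (1 : ℝ), omegaM M (t * s) / s ^ (1 + 1 / γ)) ≤
        L' * omegaM M t + C') ↔
    (∃ C'' > (0 : ℝ), ∃ L'' > (0 : ℝ), ∀ x : ℝ, 0 ≤ x →
      (∫ s in Set.Ioi (0 : ℝ), omegaM M (Real.exp (x + s)) * Real.exp (-s / γ)) ≤
        L'' * omegaM M (Real.exp x) + C'') := by
  constructor
  · rintro ⟨C', hC', L', hL', h⟩
    exact ⟨C', hC', L', hL', fun x _ => by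
      rw [← omegaM_cov M hγ x]; exact h (Real.exp x) (Real.exp_pos x).le⟩
  · rintro ⟨C'', hC'', L'', hL'', h⟩
    have hω1 : 0 ≤ omegaM M 1 := omegaM_nonneg M hpos hws zero_le_one
    refine ⟨L'' * omegaM M 1 + C'', by positivity, L'', hL'', fun t ht => ?_⟩
    have hωt : 0 ≤ omegaM M t := omegaM_nonneg M hpos hws ht
    have hLω : 0 ≤ L'' * omegaM M t := mul_nonneg hL''.le hωt
    rcases le_or_gt 1 t with h1t | h1t
    · -- t ≥ 1 : direct change of variables
      have hlt : (0 : ℝ) < t := lt_of_lt_of_le one_pos h1t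
      have hkey := h (Real.log t) (Real.log_nonneg h1t)
      rw [← omegaM_cov M hγ (Real.log t), Real.exp_log hlt] at hkey
      nlinarith
    · -- t < 1
      set f1 : ℝ → ℝ := fun s => omegaM M (1 * s) / s ^ (1 + 1 / γ) with hf1
      have hf1val : (∫ s in Set.Ioi (1 : ℝ), f1 s) ≤ L'' * omegaM M 1 + C'' := by
        have hkey := h 0 le_rfl
        rw [← omegaM_cov M hγ 0, Real.exp_zero] at hkey
        exact hkey
      by_cases hI : Integrable f1 (volume.restrict (Set.Ioi (1 : ℝ)))
      · -- compare with f1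
        have hmono : (∫ s in Set.Ioi (1 : ℝ), omegaM M (t * s) / s ^ (1 + 1 / γ)) ≤
            ∫ s in Set.Ioi (1 : ℝ), f1 s := by
          refine integral_mono_of_nonneg ?_ hI ?_
          · refine (ae_restrict_iff' measurableSet_Ioi).2 (ae_of_all _ fun s hs => ?_)
            have hs1 : (1 : ℝ) < s := hs
            have hsp : (0 : ℝ) < s := lt_trans one_pos hs1
            have hω : 0 ≤ omegaM M (t * s) :=
              omegaM_nonneg M hpos hws (mul_nonneg ht hsp.le)
            have hpow : (0 : ℝ) < s ^ (1 + 1 / γ) := Real.rpow_pos_of_pos hsp _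
            positivity
          · refine (ae_restrict_iff' measurableSet_Ioi).2 (ae_of_all _ fun s hs => ?_)
            have hs1 : (1 : ℝ) < s := hs
            have hspos : (0 : ℝ) < s := lt_trans one_pos hs1
            have hω : omegaM M (t * s) ≤ omegaM M (1 * s) := by
              apply omegaM_mono M hpos hws (mul_nonneg ht hspos.le)
              nlinarith
            have hpow : (0 : ℝ) < s ^ (1 + 1 / γ) := Real.rpow_pos_of_pos hspos _
            exact div_le_div_of_nonneg_right hω hpow.le
        nlinarith
      · -- f1 not integrable
        rcases eq_or_lt_of_le ht with h0 | h0
        · -- t = 0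
          have hz : (fun s : ℝ => omegaM M (t * s) / s ^ (1 + 1 / γ)) = fun _ => (0 : ℝ) := by
            funext s
            rw [← h0, zero_mul, omegaM_zero M hpos, zero_div]
          rw [hz, integral_zero]
          positivity
        · -- 0 < t < 1
          have hiff : ∀ s : ℝ, (1 : ℝ) < s * t⁻¹ ↔ t < s := by
            intro s
            rw [← div_eq_mul_inv, lt_div_iff₀ h0, one_mul]
          have hft : ¬ Integrable (fun s => omegaM M (t * s) / s ^ (1 + 1 / γ))
              (volume.restrict (Set.Ioi (1 : ℝ))) := by
            intro hft
            apply hI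
            have h1 : Integrable
                (Set.indicator (Set.Ioi (1 : ℝ))
                  (fun s => omegaM M (t * s) / s ^ (1 + 1 / γ))) volume := by
              rwa [integrable_indicator_iff measurableSet_Ioi]
            have h2 : Integrable (fun s : ℝ =>
                Set.indicator (Set.Ioi (1 : ℝ))
                  (fun s => omegaM M (t * s) / s ^ (1 + 1 / γ)) (s * t⁻¹)) volume :=
              h1.comp_mul_right' (inv_ne_zero h0.ne')
            have heq : (fun s : ℝ =>
                Set.indicator (Set.Ioi (1 : ℝ))
                  (fun s => omegaM M (t * s) / s ^ (1 + 1 / γ)) (s * t⁻¹)) =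
                Set.indicator (Set.Ioi t)
                  (fun s => omegaM M (t * (s * t⁻¹)) / (s * t⁻¹) ^ (1 + 1 / γ)) := by
              funext s
              by_cases hs : s ∈ Set.Ioi t
              · have hs' : s * t⁻¹ ∈ Set.Ioi (1 : ℝ) := (hiff s).2 hs
                rw [Set.indicator_of_mem hs, Set.indicator_of_mem hs']
              · have hs' : s * t⁻¹ ∉ Set.Ioi (1 : ℝ) := fun hmem => hs ((hiff s).1 hmem)
                rw [Set.indicator_of_notMem hs, Set.indicator_of_notMem hs']
            rw [heq, integrable_indicator_iff measurableSet_Ioi] at h2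
            have h3 : Integrable
                (fun s : ℝ => omegaM M (t * (s * t⁻¹)) / (s * t⁻¹) ^ (1 + 1 / γ))
                (volume.restrict (Set.Ioi (1 : ℝ))) :=
              IntegrableOn.mono_set h2 (Set.Ioi_subset_Ioi h1t.le)
            have h4 : Integrable (fun s : ℝ =>
                (t⁻¹) ^ (1 + 1 / γ) * (omegaM M (t * (s * t⁻¹)) / (s * t⁻¹) ^ (1 + 1 / γ)))
                (volume.restrict (Set.Ioi (1 : ℝ))) := h3.const_mul _
            refine h4.congr ?_
            refine (ae_restrict_iff' measurableSet_Ioi).2 (ae_of_all _ fun s hs => ?_)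
            have hs1 : (1 : ℝ) < s := hs
            have hspos : (0 : ℝ) < s := lt_trans one_pos hs1
            have hts : t * (s * t⁻¹) = s := by field_simp
            have hsr : (0 : ℝ) < s ^ (1 + 1 / γ) := Real.rpow_pos_of_pos hspos _
            have htr : (0 : ℝ) < (t⁻¹) ^ (1 + 1 / γ) :=
              Real.rpow_pos_of_pos (inv_pos.2 h0) _
            simp only [hf1]
            rw [hts, Real.mul_rpow hspos.le (inv_nonneg.2 h0.le), one_mul]
            field_simp
          rw [integral_undef hft]
          positivity
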